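/- arXiv:2311.10772 — 2 statements merged into one kernel-verified Lean document; each statement's English description precedes it below -/
import Mathlib

section
/- Let A, B, C, D be four distinct points on a circle with center O and radius r, let P be the intersection of lines AB and CD and Q the intersection of lines AD and BC (both assumed to exist), and let M be the Miquel point of the quadrangle ABCD, i.e. the common point of the circumcircles of triangles PAD, PBC, QAB, QCD. Then M lies on the line PQ and the line OM is perpendicular to the line PQ. -/
/-! Let `s` be the circle `ABCD`. The power of `P` with respect to the circles `QAB` and `QCD`
equals its power with respect to `s` (measured along the chords `AB` and `CD`), so `P` lies on
their radical axis, which is the line `QM`. Measuring powers along this line then gives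
`⟪Q - P, M - P⟫ = pow_s P` and `⟪P - Q, M - Q⟫ = pow_s Q`; the difference of the two is
`⟪Q - P, 2M - P - Q⟫ = ‖P - O‖² - ‖Q - O‖² = ⟪Q - P, 2O - P - Q⟫`, i.e. `⟪M - O, Q - P⟫ = 0`. -/

open EuclideanGeometry

section Collinear

variable {k V P : Type*} [DivisionRing k] [AddCommGroup V] [Module k V] [AddTorsor V P]

theorem notMem_affineSpan_pair_of_not_collinear {a b c : P} (h : ¬Collinear k {a, b, c}) :
    a ∉ line[k, b, c] :=
  fun ha => h (collinear_insert_of_mem_affineSpan_pair ha)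

theorem eq_of_mem_affineSpan_pair_of_not_collinear {a b c p : P} (h : ¬Collinear k {a, b, c})
    (hb : p ∈ line[k, a, b]) (hc : p ∈ line[k, a, c]) : p = a := by
  by_contra hpa
  have hb' : b ∈ line[k, a, p] := (collinear_insert_of_mem_affineSpan_pair hb)
    |>.mem_affineSpan_of_mem_of_ne (by simp) (by simp) (by simp) (Ne.symm hpa)
  have hc' : c ∈ line[k, a, p] := (collinear_insert_of_mem_affineSpan_pair hc)
    |>.mem_affineSpan_of_mem_of_ne (by simp) (by simp) (by simp) (Ne.symm hpa)
  exact h ((collinear_insert_insert_of_mem_affineSpan_pair hb' hc').subset (by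
    intro x hx
    simp only [Set.mem_insert_iff, Set.mem_singleton_iff] at hx ⊢
    tauto))

end Collinear

namespace EuclideanGeometry

open scoped RealInnerProductSpace
open Module

variable {V P : Type*} [NormedAddCommGroup V] [InnerProductSpace ℝ V] [MetricSpace P]
  [NormedAddTorsor V P]

theorem Cospherical.exists_sphere_of_four {a b c d : P} (h : Cospherical ({a, b, c, d} : Set P)) :
    ∃ s : Sphere P, a ∈ s ∧ b ∈ s ∧ c ∈ s ∧ d ∈ s := by
  obtain ⟨s, hs⟩ := cospherical_iff_exists_sphere.mp h
  simp only [Set.insert_subset_iff, Set.singleton_subset_iff, Sphere.mem_coe] at hs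
  exact ⟨s, hs⟩

theorem Sphere.eq_or_eq_of_mem_affineSpan_pair {s : Sphere P} {a b p : P} (ha : a ∈ s)
    (hb : b ∈ s) (hp : p ∈ s) (hab : a ≠ b) (hpab : p ∈ line[ℝ, a, b]) : p = a ∨ p = b := by
  by_contra! hne
  have hs : Cospherical ({a, b, p} : Set P) :=
    cospherical_iff_exists_sphere.mpr ⟨s, by simp [Set.insert_subset_iff, ha, hb, hp]⟩
  refine affineIndependent_iff_not_collinear_set.mp
    (hs.affineIndependent_of_ne hab hne.1.symm hne.2.symm) ?_
  have := collinear_insert_of_mem_affineSpan_pair hpab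
  rwa [Set.insert_comm, Set.pair_comm] at this

theorem Sphere.notMem_of_mem_affineSpan_pair_of_not_collinear {s : Sphere P} {a b c d p : P}
    (ha : a ∈ s) (hb : b ∈ s) (hab : a ≠ b) (hacd : ¬Collinear ℝ {a, c, d})
    (hbcd : ¬Collinear ℝ {b, c, d}) (hpab : p ∈ line[ℝ, a, b]) (hpcd : p ∈ line[ℝ, c, d]) :
    p ∉ s := by
  intro hp
  rcases s.eq_or_eq_of_mem_affineSpan_pair ha hb hp hab hpab with rfl | rfl
  exacts [notMem_affineSpan_pair_of_not_collinear hacd hpcd,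
    notMem_affineSpan_pair_of_not_collinear hbcd hpcd]

theorem Sphere.power_eq_zero_of_mem {s : Sphere P} {p : P} (hp : p ∈ s) : s.power p = 0 := by
  rw [Sphere.power, mem_sphere.mp hp, sub_self]

theorem Sphere.inner_vsub_vsub_eq_power {s : Sphere P} {a b p : P} (ha : a ∈ s) (hb : b ∈ s)
    (hp : p ∈ line[ℝ, a, b]) : ⟪a -ᵥ p, b -ᵥ p⟫ = s.power p := by
  obtain ⟨t, rfl⟩ := mem_affineSpan_pair_iff_exists_lineMap_eq.mp hp
  have ha' := mem_sphere.mp ha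
  have hb' := mem_sphere.mp hb
  rw [dist_eq_norm_vsub V] at ha' hb'
  rw [Sphere.power, dist_eq_norm_vsub V, AffineMap.lineMap_apply]
  set u := a -ᵥ s.center
  set w := b -ᵥ s.center
  have hba : b -ᵥ a = w - u := (vsub_sub_vsub_cancel_right b a s.center).symm
  have hap : a -ᵥ (t • (b -ᵥ a) +ᵥ a) = -(t • (w - u)) := by
    rw [vsub_vadd_eq_vsub_sub, vsub_self, zero_sub, hba]
  have hbp : b -ᵥ (t • (b -ᵥ a) +ᵥ a) = (1 - t) • (w - u) := by
    rw [vsub_vadd_eq_vsub_sub, hba, sub_smul, one_smul]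
  have hpc : (t • (b -ᵥ a) +ᵥ a) -ᵥ s.center = t • (w - u) + u := by rw [vadd_vsub_assoc, hba]
  have huw : ‖u‖ = ‖w‖ := ha'.trans hb'.symm
  rw [hap, hbp, hpc, ← ha', inner_neg_left, real_inner_smul_left, real_inner_smul_right,
    real_inner_self_eq_norm_sq, norm_add_sq_real, norm_smul, real_inner_smul_left, mul_pow,
    Real.norm_eq_abs, sq_abs, inner_sub_left, real_inner_self_eq_norm_sq, norm_sub_sq_real, huw]
  ring

theorem Sphere.power_eq_power_of_mem_affineSpan_pair {s₁ s₂ : Sphere P} {a b p : P}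
    (ha₁ : a ∈ s₁) (hb₁ : b ∈ s₁) (ha₂ : a ∈ s₂) (hb₂ : b ∈ s₂) (hp : p ∈ line[ℝ, a, b]) :
    s₁.power p = s₂.power p :=
  (s₁.inner_vsub_vsub_eq_power ha₁ hb₁ hp).symm.trans (s₂.inner_vsub_vsub_eq_power ha₂ hb₂ hp)

theorem Sphere.inner_vsub_vsub_of_power_eq {s₁ s₂ : Sphere P} {p q : P}
    (hp : s₁.power p = s₂.power p) (hq : s₁.power q = s₂.power q) :
    ⟪s₂.center -ᵥ s₁.center, q -ᵥ p⟫ = 0 := by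
  have hdist (c : P) :
      dist q c ^ 2 = ‖q -ᵥ p‖ ^ 2 + 2 * ⟪q -ᵥ p, p -ᵥ c⟫ + dist p c ^ 2 := by
    rw [dist_eq_norm_vsub V, dist_eq_norm_vsub V, ← vsub_add_vsub_cancel q p c, norm_add_sq_real]
  unfold Sphere.power at hp hq
  rw [hdist, hdist] at hq
  rw [← vsub_sub_vsub_cancel_left s₂.center s₁.center p, real_inner_comm, inner_sub_right]
  linarith

theorem mem_affineSpan_pair_of_inner_vsub_eq_zero (hV : finrank ℝ V = 2) {v : V} (hv : v ≠ 0)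
    {p q m : P} (hpq : p ≠ q) (hq : ⟪v, q -ᵥ p⟫ = 0) (hm : ⟪v, m -ᵥ p⟫ = 0) :
    m ∈ line[ℝ, p, q] := by
  have : Fact (finrank ℝ V = 1 + 1) := ⟨hV⟩
  have hline : finrank ℝ (ℝ ∙ v)ᗮ = 1 := Submodule.finrank_orthogonal_span_singleton hv
  have hq' : q -ᵥ p ∈ (ℝ ∙ v)ᗮ := Submodule.mem_orthogonal_singleton_iff_inner_right.mpr hq
  have hm' : m -ᵥ p ∈ (ℝ ∙ v)ᗮ := Submodule.mem_orthogonal_singleton_iff_inner_right.mpr hm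
  obtain ⟨c, hc⟩ := (finrank_eq_one_iff_of_nonzero' (⟨q -ᵥ p, hq'⟩ : (ℝ ∙ v)ᗮ)
    (by simpa using vsub_ne_zero.mpr hpq.symm)).mp hline ⟨m -ᵥ p, hm'⟩
  rw [← vsub_vadd m p, vadd_left_mem_affineSpan_pair]
  exact ⟨c, congrArg Subtype.val hc⟩

theorem Sphere.mem_affineSpan_pair_of_power_eq (hV : finrank ℝ V = 2) {s₁ s₂ : Sphere P}
    {p q m : P} (hc : s₁.center ≠ s₂.center) (hq₁ : q ∈ s₁) (hq₂ : q ∈ s₂) (hm₁ : m ∈ s₁)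
    (hm₂ : m ∈ s₂) (hp : s₁.power p = s₂.power p) (hpq : p ≠ q) : m ∈ line[ℝ, p, q] := by
  refine mem_affineSpan_pair_of_inner_vsub_eq_zero hV (vsub_ne_zero.mpr hc.symm) hpq
    (Sphere.inner_vsub_vsub_of_power_eq hp ?_) (Sphere.inner_vsub_vsub_of_power_eq hp ?_)
  · rw [Sphere.power_eq_zero_of_mem hq₁, Sphere.power_eq_zero_of_mem hq₂]
  · rw [Sphere.power_eq_zero_of_mem hm₁, Sphere.power_eq_zero_of_mem hm₂]

theorem inner_vsub_center_vsub_eq_zero_of_inner_eq_power {s : Sphere P} {p q m : P}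
    (hp : ⟪q -ᵥ p, m -ᵥ p⟫ = s.power p) (hq : ⟪p -ᵥ q, m -ᵥ q⟫ = s.power q) :
    ⟪m -ᵥ s.center, q -ᵥ p⟫ = 0 := by
  unfold Sphere.power at hp hq
  rw [dist_eq_norm_vsub V, ← real_inner_self_eq_norm_sq] at hp hq
  rw [← vsub_sub_vsub_cancel_right q p s.center, ← vsub_sub_vsub_cancel_right m p s.center] at hp
  rw [← vsub_sub_vsub_cancel_right p q s.center, ← vsub_sub_vsub_cancel_right m q s.center] at hq
  rw [← vsub_sub_vsub_cancel_right q p s.center]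
  simp only [inner_sub_left, inner_sub_right, real_inner_comm] at hp hq ⊢
  linarith

end EuclideanGeometry

theorem miquel_point_of_cyclic_quadrangle_on_PQ_and_perp_general
    (A B C D O P Q M : ℂ) (r : ℝ)
    -- A, B, C, D are distinct points on the circle with center O and radius r
    (hA : dist A O = r) (hB : dist B O = r) (hC : dist C O = r) (hD : dist D O = r)
    -- no three of A, B, C, D are collinear
    (h₁ : ¬ Collinear ℝ ({A, B, C} : Set ℂ)) (h₂ : ¬ Collinear ℝ ({A, B, D} : Set ℂ))
    (h₃ : ¬ Collinear ℝ ({A, C, D} : Set ℂ)) (h₄ : ¬ Collinear ℝ ({B, C, D} : Set ℂ))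
    -- P = AB ∩ CD, Q = AD ∩ BC
    (hP₁ : P ∈ line[ℝ, A, B]) (hP₂ : P ∈ line[ℝ, C, D])
    (hQ₁ : Q ∈ line[ℝ, A, D]) (hQ₂ : Q ∈ line[ℝ, B, C])
    -- M is the Miquel point: common point of circles (PAD), (PBC), (QAB), (QCD)
    (hM₁ : Cospherical ({P, A, D, M} : Set ℂ))
    (hM₃ : Cospherical ({Q, A, B, M} : Set ℂ))
    (hM₄ : Cospherical ({Q, C, D, M} : Set ℂ)) :
    -- conclusion: M ∈ PQ and OM ⊥ PQ
    M ∈ line[ℝ, P, Q] ∧ (inner ℝ (M - O) (Q - P) : ℝ) = 0 := by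
  set s : Sphere ℂ := ⟨O, r⟩
  obtain ⟨s₁, hP_s₁, hA_s₁, hD_s₁, hM_s₁⟩ := hM₁.exists_sphere_of_four
  obtain ⟨s₃, hQ_s₃, hA_s₃, hB_s₃, hM_s₃⟩ := hM₃.exists_sphere_of_four
  obtain ⟨s₄, hQ_s₄, hC_s₄, hD_s₄, hM_s₄⟩ := hM₄.exists_sphere_of_four
  have hPQ : P ≠ Q := fun hPQ => notMem_affineSpan_pair_of_not_collinear h₃
    (eq_of_mem_affineSpan_pair_of_not_collinear h₂ hP₁ (hPQ ▸ hQ₁) ▸ hP₂)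
  have hMP : M ≠ P := fun hMP => s₃.notMem_of_mem_affineSpan_pair_of_not_collinear hA_s₃ hB_s₃
    (ne₁₂_of_not_collinear h₁) h₃ h₄ hP₁ hP₂ (hMP ▸ hM_s₃)
  have hMQ : M ≠ Q := fun hMQ => s₁.notMem_of_mem_affineSpan_pair_of_not_collinear hA_s₁ hD_s₁
    (ne₁₃_of_not_collinear h₂) h₁ (by rwa [Set.pair_comm, Set.insert_comm] at h₄) hQ₁ hQ₂
    (hMQ ▸ hM_s₁)
  have hc : s₃.center ≠ s₄.center := fun hc => by
    have hs : s₃ = s₄ := Sphere.ext hc (by rw [← mem_sphere.mp hQ_s₃, ← mem_sphere.mp hQ_s₄, hc])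
    exact s₃.notMem_of_mem_affineSpan_pair_of_not_collinear hB_s₃ (hs ▸ hC_s₄)
      (ne₂₃_of_not_collinear h₁) (by rwa [Set.insert_comm] at h₂)
      (by rwa [Set.insert_comm] at h₃) hQ₂ hQ₁ hQ_s₃
  have hP₃ : s₃.power P = s.power P := s₃.power_eq_power_of_mem_affineSpan_pair hA_s₃ hB_s₃
    (mem_sphere.mpr hA) (mem_sphere.mpr hB) hP₁
  have hP₄ : s₄.power P = s.power P := s₄.power_eq_power_of_mem_affineSpan_pair hC_s₄ hD_s₄
    (mem_sphere.mpr hC) (mem_sphere.mpr hD) hP₂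
  have hQ₁' : s₁.power Q = s.power Q := s₁.power_eq_power_of_mem_affineSpan_pair hA_s₁ hD_s₁
    (mem_sphere.mpr hA) (mem_sphere.mpr hD) hQ₁
  have hM : M ∈ line[ℝ, P, Q] := Sphere.mem_affineSpan_pair_of_power_eq
    Complex.finrank_real_complex hc hQ_s₃ hQ_s₄ hM_s₃ hM_s₄ (hP₃.trans hP₄.symm) hPQ
  have hMPQ : Collinear ℝ {M, P, Q} := collinear_insert_of_mem_affineSpan_pair hM
  have hP : P ∈ line[ℝ, Q, M] :=
    hMPQ.mem_affineSpan_of_mem_of_ne (by simp) (by simp) (by simp) hMQ.symm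
  have hQ : Q ∈ line[ℝ, P, M] :=
    hMPQ.mem_affineSpan_of_mem_of_ne (by simp) (by simp) (by simp) hMP.symm
  exact ⟨hM, inner_vsub_center_vsub_eq_zero_of_inner_eq_power
    ((s₃.inner_vsub_vsub_eq_power hQ_s₃ hM_s₃ hP).trans hP₃)
    ((s₁.inner_vsub_vsub_eq_power hP_s₁ hM_s₁ hQ).trans hQ₁')⟩

theorem miquel_point_of_cyclic_quadrangle_on_PQ_and_perp
    (A B C D O P Q M : ℂ) (r : ℝ)
    -- A, B, C, D are distinct points on the circle with center O and radius r
    (hdist : List.Pairwise (· ≠ ·) [A, B, C, D])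
    (hA : dist A O = r) (hB : dist B O = r) (hC : dist C O = r) (hD : dist D O = r)
    -- no three of A, B, C, D are collinear
    (h₁ : ¬ Collinear ℝ ({A, B, C} : Set ℂ)) (h₂ : ¬ Collinear ℝ ({A, B, D} : Set ℂ))
    (h₃ : ¬ Collinear ℝ ({A, C, D} : Set ℂ)) (h₄ : ¬ Collinear ℝ ({B, C, D} : Set ℂ))
    -- P = AB ∩ CD, Q = AD ∩ BC
    (hP₁ : P ∈ line[ℝ, A, B]) (hP₂ : P ∈ line[ℝ, C, D])
    (hQ₁ : Q ∈ line[ℝ, A, D]) (hQ₂ : Q ∈ line[ℝ, B, C])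
    -- M is the Miquel point: common point of circles (PAD), (PBC), (QAB), (QCD)
    (hM₁ : Cospherical ({P, A, D, M} : Set ℂ))
    (hM₂ : Cospherical ({P, B, C, M} : Set ℂ))
    (hM₃ : Cospherical ({Q, A, B, M} : Set ℂ))
    (hM₄ : Cospherical ({Q, C, D, M} : Set ℂ)) :
    -- conclusion: M ∈ PQ and OM ⊥ PQ
    M ∈ line[ℝ, P, Q] ∧ (inner ℝ (M - O) (Q - P) : ℝ) = 0 :=
  miquel_point_of_cyclic_quadrangle_on_PQ_and_perp_general A B C D O P Q M r hA hB hC hD h₁ h₂ h₃ h₄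
    hP₁ hP₂ hQ₁ hQ₂ hM₁ hM₃ hM₄
end

section
/- Let A, B, C, D be four distinct points on a circle with center O, with P = AB ∩ CD and Q = AD ∩ BC existing, and let R = AC ∩ BD be the intersection of the diagonals. Then the inverse R* of R with respect to the circle (the point on ray OR with OR · OR* = r²) is the Miquel point of the quadrangle ABCD, i.e. R* lies on the circumcircles of triangles PAD, PBC, QAB and QCD. -/
/-!
Move the center to `0 ∈ ℂ` and put `s = r²`. A point `a` of the circle has `conj a = s / a`, and
the chord through `a, b` is the line `s z + a b (conj z) = s (a + b)`. Solving these equations gives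
`P = (ab(c+d) - cd(a+b)) / (ab - cd)` and `R = (ac(b+d) - bd(a+c)) / (ac - bd)`, and the inverse of
`R` is `s / conj R`. The circle through `A`, `D`, `P` has center `ω = ad(b-c)/(ab-cd)` and equation
`z conj z - conj ω z - ω conj z = s(ac-bd)/(ab-cd)`. Checking that `R` lies on the image of that
circle under the inversion is a rational identity in `a, b, c, d`. The other three circles are the
same statement for relabellings of `A, B, C, D`.
-/

open EuclideanGeometry ComplexConjugate

lemma mul_conj_sub_eq_sq_of_dist_eq {O X : ℂ} {r : ℝ} (h : dist X O = r) :
    (X - O) * conj (X - O) = (r : ℂ) ^ 2 := by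
  rw [Complex.mul_conj, Complex.normSq_eq_norm_sq, ← Complex.dist_eq, h]
  push_cast; rfl

lemma dist_eq_dist_of_mul_conj_eq {X Y c : ℂ}
    (h : (X - c) * conj (X - c) = (Y - c) * conj (Y - c)) : dist X c = dist Y c := by
  rwa [Complex.mul_conj, Complex.mul_conj, Complex.ofReal_inj, Complex.normSq_eq_norm_sq,
    Complex.normSq_eq_norm_sq, sq_eq_sq₀ (norm_nonneg _) (norm_nonneg _), ← Complex.dist_eq,
    ← Complex.dist_eq] at h

lemma chord_equation_of_mem_line {O A B X : ℂ} {r : ℝ} (hA : dist A O = r) (hB : dist B O = r)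
    (hX : X ∈ line[ℝ, A, B]) :
    (r : ℂ) ^ 2 * (X - O) + (A - O) * (B - O) * conj (X - O) =
      (r : ℂ) ^ 2 * ((A - O) + (B - O)) := by
  obtain ⟨t, rfl⟩ := mem_affineSpan_pair_iff_exists_lineMap_eq.1 hX
  have hX : AffineMap.lineMap A B t - O = (1 - t : ℂ) * (A - O) + t * (B - O) := by
    rw [AffineMap.lineMap_apply_module, Complex.real_smul, Complex.real_smul]; push_cast; ring
  have hA' := mul_conj_sub_eq_sq_of_dist_eq hA
  have hB' := mul_conj_sub_eq_sq_of_dist_eq hB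
  rw [hX]
  generalize A - O = a at hA' ⊢
  generalize B - O = b at hB' ⊢
  simp only [map_add, map_mul, map_sub, map_one, Complex.conj_ofReal]
  linear_combination (1 - t : ℂ) * b * hA' + t * a * hB'

lemma chord_intersection_eq {s a b c d x : ℂ} (hs : s ≠ 0)
    (hab : s * x + a * b * conj x = s * (a + b)) (hcd : s * x + c * d * conj x = s * (c + d))
    (hca : c ≠ a) (hcb : c ≠ b) :
    a * b - c * d ≠ 0 ∧ x = (a * b * (c + d) - c * d * (a + b)) / (a * b - c * d) ∧
      conj x = s * (a + b - c - d) / (a * b - c * d) := by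
  have hne : a * b - c * d ≠ 0 := by
    intro h
    have hsum : a + b = c + d :=
      mul_left_cancel₀ hs (by linear_combination hcd - hab + conj x * h)
    have : (c - a) * (c - b) = 0 := by linear_combination h - c * hsum
    rcases mul_eq_zero.1 this with h' | h'
    exacts [hca (sub_eq_zero.1 h'), hcb (sub_eq_zero.1 h')]
  refine ⟨hne, ?_, ?_⟩ <;> rw [eq_div_iff hne]
  · exact mul_left_cancel₀ hs (by linear_combination a * b * hcd - c * d * hab)
  · linear_combination hab - hcd

lemma inversion_sub_mul_conj {O R : ℂ} (r : ℝ) (hR : R ≠ O) :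
    (inversion O r R - O) * conj (R - O) = (r : ℂ) ^ 2 := by
  have hR' : (Complex.normSq (R - O) : ℂ) ≠ 0 := by
    exact_mod_cast (Complex.normSq_pos.2 (sub_ne_zero.2 hR)).ne'
  rw [inversion, vadd_eq_add, vsub_eq_sub, add_sub_cancel_right, Complex.real_smul, mul_assoc,
    Complex.mul_conj, Complex.dist_eq, div_pow, ← Complex.normSq_eq_norm_sq]
  push_cast
  exact div_mul_cancel₀ _ hR'

lemma dist_eq_dist_of_circle_eq {ω k X Y : ℂ}
    (hX : X * conj X - conj ω * X - ω * conj X = k)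
    (hY : Y * conj Y - conj ω * Y - ω * conj Y = k) : dist X ω = dist Y ω := by
  apply dist_eq_dist_of_mul_conj_eq
  simp only [map_sub]
  linear_combination hX - hY

lemma circle_eq_of_inverse {s ω k x m : ℂ} (hs : conj s = s) (hx : x ≠ 0) (hm : m * conj x = s)
    (h : s ^ 2 - conj ω * s * x - ω * s * conj x = k * x * conj x) :
    m * conj m - conj ω * m - ω * conj m = k := by
  have hm' : conj m * x = s := by simpa [hs] using congrArg conj hm
  have hxx : x * conj x ≠ 0 := mul_ne_zero hx ((map_ne_zero conj).2 hx)
  refine mul_right_cancel₀ hxx ?_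
  linear_combination h + (conj m * x - conj ω * x) * hm + (s - ω * conj x) * hm'

lemma conj_eq_div_of_mul_conj_eq {s a : ℂ} (hs : s ≠ 0) (h : a * conj a = s) :
    conj a = s / a := by
  have ha : a ≠ 0 := left_ne_zero_of_mul (h ▸ hs)
  rw [eq_div_iff ha, ← h, mul_comm]

lemma exists_miquel_center {s a b c d p x m : ℂ} (hs : s ≠ 0) (hs' : conj s = s)
    (ha : a * conj a = s) (hb : b * conj b = s) (hc : c * conj c = s) (hd : d * conj d = s)
    (hab : a ≠ b) (hbc : b ≠ c) (hca : c ≠ a)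
    (hp₁ : s * p + a * b * conj p = s * (a + b)) (hp₂ : s * p + c * d * conj p = s * (c + d))
    (hx₁ : s * x + a * c * conj x = s * (a + c)) (hx₂ : s * x + b * d * conj x = s * (b + d))
    (hx0 : x ≠ 0) (hm : m * conj x = s) :
    ∃ ω, dist p ω = dist a ω ∧ dist d ω = dist a ω ∧ dist m ω = dist a ω := by
  obtain ⟨hab_cd, hp, hp'⟩ := chord_intersection_eq hs hp₁ hp₂ hca hbc.symm
  obtain ⟨hac_bd, hx, hx'⟩ := chord_intersection_eq hs hx₁ hx₂ hab.symm hbc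
  have ha0 : a ≠ 0 := left_ne_zero_of_mul (ha ▸ hs)
  have hb0 : b ≠ 0 := left_ne_zero_of_mul (hb ▸ hs)
  have hc0 : c ≠ 0 := left_ne_zero_of_mul (hc ▸ hs)
  have hd0 : d ≠ 0 := left_ne_zero_of_mul (hd ▸ hs)
  have ha' := conj_eq_div_of_mul_conj_eq hs ha
  have hb' := conj_eq_div_of_mul_conj_eq hs hb
  have hc' := conj_eq_div_of_mul_conj_eq hs hc
  have hd' := conj_eq_div_of_mul_conj_eq hs hd
  have hω : conj (a * d * (b - c) / (a * b - c * d)) = s * (b - c) / (a * b - c * d) := by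
    have hD' := (map_ne_zero conj).2 hab_cd
    simp only [map_div₀, map_mul, map_sub, ha', hb', hc', hd'] at hD' ⊢
    rw [div_eq_div_iff hD' hab_cd]
    field_simp
    ring
  -- opaque denominators, so that `field_simp` recognises them as the nonzero `D` and `E`
  generalize hD : a * b - c * d = D at hab_cd hp hp' hω
  generalize hE : a * c - b * d = E at hac_bd hx hx'
  have hΓa : a * conj a - conj (a * d * (b - c) / D) * a - a * d * (b - c) / D * conj a =
      s * E / D := by
    rw [hω, ha']; field_simp; subst hD hE; ring
  refine ⟨_, dist_eq_dist_of_circle_eq ?_ hΓa, dist_eq_dist_of_circle_eq ?_ hΓa,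
    dist_eq_dist_of_circle_eq (circle_eq_of_inverse hs' hx0 hm ?_) hΓa⟩
  · rw [hω, hp', hp]; field_simp; subst hD hE; ring
  · rw [hω, hd']; field_simp; subst hD hE; ring
  · rw [hω, hx', hx]; field_simp; subst hD hE; ring

theorem cospherical_inversion_of_mem_chords {A B C D O P R : ℂ} {r : ℝ}
    (hAB : A ≠ B) (hBC : B ≠ C) (hCA : C ≠ A)
    (hA : dist A O = r) (hB : dist B O = r) (hC : dist C O = r) (hD : dist D O = r)
    (hP₁ : P ∈ line[ℝ, A, B]) (hP₂ : P ∈ line[ℝ, C, D])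
    (hR₁ : R ∈ line[ℝ, A, C]) (hR₂ : R ∈ line[ℝ, B, D]) (hRO : R ≠ O) :
    Cospherical ({P, A, D, inversion O r R} : Set ℂ) := by
  have hr : (r : ℂ) ^ 2 ≠ 0 := by
    refine pow_ne_zero 2 (Complex.ofReal_ne_zero.2 ?_)
    rintro rfl
    exact hAB ((dist_eq_zero.1 hA).trans (dist_eq_zero.1 hB).symm)
  obtain ⟨ω, hPω, hDω, hMω⟩ := exists_miquel_center hr (by simp)
    (mul_conj_sub_eq_sq_of_dist_eq hA) (mul_conj_sub_eq_sq_of_dist_eq hB)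
    (mul_conj_sub_eq_sq_of_dist_eq hC) (mul_conj_sub_eq_sq_of_dist_eq hD)
    (sub_left_injective.ne hAB) (sub_left_injective.ne hBC) (sub_left_injective.ne hCA)
    (chord_equation_of_mem_line hA hB hP₁) (chord_equation_of_mem_line hC hD hP₂)
    (chord_equation_of_mem_line hA hC hR₁) (chord_equation_of_mem_line hB hD hR₂)
    (sub_ne_zero.2 hRO) (inversion_sub_mul_conj r hRO)
  refine ⟨ω + O, dist A (ω + O), ?_⟩
  simp only [Set.mem_insert_iff, Set.mem_singleton_iff, forall_eq_or_imp, forall_eq,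
    ← dist_sub_right _ (ω + O) O, add_sub_cancel_right]
  exact ⟨hPω, trivial, hDω, hMω⟩

theorem inverse_of_diagonal_point_is_miquel_point_general
    (A B C D O P Q R : ℂ) (r : ℝ)
    -- A, B, C, D are distinct points on the circle with center O and radius r
    (hdist : List.Pairwise (· ≠ ·) [A, B, C, D])
    (hA : dist A O = r) (hB : dist B O = r) (hC : dist C O = r) (hD : dist D O = r)
    -- P = AB ∩ CD, Q = AD ∩ BC, R = AC ∩ BD
    (hP₁ : P ∈ line[ℝ, A, B]) (hP₂ : P ∈ line[ℝ, C, D])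
    (hQ₁ : Q ∈ line[ℝ, A, D]) (hQ₂ : Q ∈ line[ℝ, B, C])
    (hR₁ : R ∈ line[ℝ, A, C]) (hR₂ : R ∈ line[ℝ, B, D])
    (hRO : R ≠ O) :
    -- conclusion: the inverse of R in the circle lies on the four circumcircles
    Cospherical ({P, A, D, EuclideanGeometry.inversion O r R} : Set ℂ) ∧
    Cospherical ({P, B, C, EuclideanGeometry.inversion O r R} : Set ℂ) ∧
    Cospherical ({Q, A, B, EuclideanGeometry.inversion O r R} : Set ℂ) ∧
    Cospherical ({Q, C, D, EuclideanGeometry.inversion O r R} : Set ℂ) := by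
  obtain ⟨⟨hAB, hAC, hAD⟩, ⟨hBC, hBD⟩, hCD⟩ :
      (A ≠ B ∧ A ≠ C ∧ A ≠ D) ∧ (B ≠ C ∧ B ≠ D) ∧ C ≠ D := by
    simpa using hdist
  have comm {X Y Z : ℂ} (h : Z ∈ line[ℝ, X, Y]) : Z ∈ line[ℝ, Y, X] := by rwa [Set.pair_comm]
  refine ⟨?_, ?_, ?_, ?_⟩
  · exact cospherical_inversion_of_mem_chords hAB hBC hAC.symm hA hB hC hD hP₁ hP₂ hR₁ hR₂ hRO
  · exact cospherical_inversion_of_mem_chords hAB.symm hAD hBD.symm hB hA hD hC (comm hP₁)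
      (comm hP₂) hR₂ hR₁ hRO
  · exact cospherical_inversion_of_mem_chords hAD hCD.symm hAC.symm hA hD hC hB hQ₁ (comm hQ₂)
      hR₁ (comm hR₂) hRO
  · exact cospherical_inversion_of_mem_chords hBC.symm hAB.symm hAC hC hB hA hD (comm hQ₂) hQ₁
      (comm hR₁) hR₂ hRO

theorem inverse_of_diagonal_point_is_miquel_point
    (A B C D O P Q R : ℂ) (r : ℝ)
    -- A, B, C, D are distinct points on the circle with center O and radius r
    (hdist : List.Pairwise (· ≠ ·) [A, B, C, D])
    (hA : dist A O = r) (hB : dist B O = r) (hC : dist C O = r) (hD : dist D O = r)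
    -- no three of A, B, C, D are collinear
    (h₁ : ¬ Collinear ℝ ({A, B, C} : Set ℂ)) (h₂ : ¬ Collinear ℝ ({A, B, D} : Set ℂ))
    (h₃ : ¬ Collinear ℝ ({A, C, D} : Set ℂ)) (h₄ : ¬ Collinear ℝ ({B, C, D} : Set ℂ))
    -- P = AB ∩ CD, Q = AD ∩ BC, R = AC ∩ BD
    (hP₁ : P ∈ line[ℝ, A, B]) (hP₂ : P ∈ line[ℝ, C, D])
    (hQ₁ : Q ∈ line[ℝ, A, D]) (hQ₂ : Q ∈ line[ℝ, B, C])
    (hR₁ : R ∈ line[ℝ, A, C]) (hR₂ : R ∈ line[ℝ, B, D])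
    (hRO : R ≠ O) :
    -- conclusion: the inverse of R in the circle lies on the four circumcircles
    Cospherical ({P, A, D, EuclideanGeometry.inversion O r R} : Set ℂ) ∧
    Cospherical ({P, B, C, EuclideanGeometry.inversion O r R} : Set ℂ) ∧
    Cospherical ({Q, A, B, EuclideanGeometry.inversion O r R} : Set ℂ) ∧
    Cospherical ({Q, C, D, EuclideanGeometry.inversion O r R} : Set ℂ) :=
  inverse_of_diagonal_point_is_miquel_point_general A B C D O P Q R r hdist hA hB hC hD hP₁ hP₂ hQ₁
    hQ₂ hR₁ hR₂ hRO
end
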